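/- Let ξ^1, …, ξ^M be tangent solutions, (H_1,…,H_N) a Lamé solution, and Ω^1,…,Ω^M : ℤ^N → ℝ potentials satisfying Δ_m Ω^a = ξ^a_m·(T_m H_m) for all m and a. Let 𝒲 be the discrete multi-Wroński matrix of ξ^1,…,ξ^M for the partition M = m_1 + … + m_N. For i ∈ {1,…,N}, let ℍ_i be the M×M matrix obtained from 𝒲 by replacing the row (i, m_i−1) by (Ω^1, …, Ω^M); and for i ≠ j, let 𝒲_{ij} be obtained from 𝒲 by replacing the row (j, m_j−1) by (Δ_i^{m_i} ξ^1_i, …, Δ_i^{m_i} ξ^M_i). Then for all i ≠ k the bilinear identity holds: (det 𝒲)·Δ_k(det ℍ_i) − (det ℍ_i)·Δ_k(det 𝒲) + (det 𝒲_{ki})·T_k(det ℍ_k) = 0. -/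

import Mathlib

/-!
Write `𝒲'` for `𝒲` at `n + e_k`, and let `φ v` be the determinant of `𝒲` with its row
`(i, m_i - 1)` replaced by `v`. Since `T_k = 1 + Δ_k` and the tangent equations let `Δ_k` lower
the order of `Δ_j^q ξ_j` for `j ≠ k`, every row of `𝒲'` other than `(i, m_i - 1)` and
`(k, m_k - 1)` is a combination of rows of `𝒲` other than `(i, m_i - 1)`, so `φ` kills it;
moreover `φ 𝒲'_(i, m_i - 1) = det 𝒲`, `φ 𝒲'_(k, m_k - 1) = det 𝒲_{ki}`, and
`φ Ω(n + e_k) = det ℍ_i` because `Δ_k Ω = H_k(n + e_k) ξ_k`. Applying `φ` to Cramer's rule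
`det 𝒲' • y = ∑_r det (𝒲' with row r replaced by y) • 𝒲'_r` with `y = Ω(n + e_k)` leaves
exactly the three terms of the identity.
-/

noncomputable section

/-- Shift operator `T_j`: `(T_j f)(n) = f(n + e_j)`. -/
def T {N : ℕ} (j : Fin N) (f : (Fin N → ℤ) → ℝ) : (Fin N → ℤ) → ℝ :=
  fun n => f (n + Pi.single j 1)

/-- Difference operator `Δ_j = T_j − 1`. -/
def Δ {N : ℕ} (j : Fin N) (f : (Fin N → ℤ) → ℝ) : (Fin N → ℤ) → ℝ :=
  fun n => f (n + Pi.single j 1) - f n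

/-- The discrete multi-Wroński matrix `𝒲(n)` of the `M = m_1 + ⋯ + m_N` tangent
solutions `ξ^a` (`a` ranges over the canonical `M`-element index set
`Σ j : Fin N, Fin (m j)`): its row `(j, p)` is `(Δ_j^p ξ^a_j(n))_a`. -/
def Wmat {N : ℕ} (m : Fin N → ℕ)
    (ξ : (Σ j : Fin N, Fin (m j)) → Fin N → (Fin N → ℤ) → ℝ) (n : Fin N → ℤ) :
    Matrix (Σ j : Fin N, Fin (m j)) (Σ j : Fin N, Fin (m j)) ℝ :=
  Matrix.of fun r a => (Δ r.1)^[(r.2 : ℕ)] (ξ a r.1) n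

/-- The index `(k, m_k − 1)` of the last row of the `k`-th block. -/
def lastRow {N : ℕ} (m : Fin N → ℕ) (k : Fin N) (h : 0 < m k) :
    Σ j : Fin N, Fin (m j) :=
  ⟨k, ⟨m k - 1, Nat.sub_lt h Nat.one_pos⟩⟩

/-- The bordered matrix `𝕏_i(n)`: the multi-Wroński matrix `𝒲(n)` augmented by the
column `(Δ_j^p χ_j(n))_{(j,p)}` built from the tangent solution `χ` and by the bottom
row `(Δ_i^{m_i} ξ^a_i(n))_a, Δ_i^{m_i} χ_i(n)`. -/
def Xmat {N : ℕ} (m : Fin N → ℕ)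
    (ξ : (Σ j : Fin N, Fin (m j)) → Fin N → (Fin N → ℤ) → ℝ)
    (χ : Fin N → (Fin N → ℤ) → ℝ) (i : Fin N) (n : Fin N → ℤ) :
    Matrix (Option (Σ j : Fin N, Fin (m j))) (Option (Σ j : Fin N, Fin (m j))) ℝ :=
  Matrix.of fun r a =>
    match r, a with
    | some r, some a => (Δ r.1)^[(r.2 : ℕ)] (ξ a r.1) n
    | some r, none => (Δ r.1)^[(r.2 : ℕ)] (χ r.1) n
    | none, some a => (Δ i)^[m i] (ξ a i) n
    | none, none => (Δ i)^[m i] (χ i) n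
namespace Matrix

variable {ι R : Type*} [Fintype ι] [DecidableEq ι] [CommRing R]

theorem det_smul_eq_sum_det_updateRow_smul (A : Matrix ι ι R) (x : ι → R) :
    A.det • x = ∑ r, (A.updateRow r x).det • A r := by
  rw [← det_transpose, ← mulVec_cramer, mulVec_transpose, vecMul_eq_sum]
  simp only [cramer_transpose_apply]

def detUpdateRow (A : Matrix ι ι R) (i : ι) : (ι → R) →ₗ[R] R where
  toFun v := (A.updateRow i v).det
  map_add' := det_updateRow_add A i
  map_smul' := det_updateRow_smul A i

@[simp]
theorem detUpdateRow_apply (A : Matrix ι ι R) (i : ι) (v : ι → R) :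
    A.detUpdateRow i v = (A.updateRow i v).det := rfl

theorem detUpdateRow_eq_zero_of_mem_span {A : Matrix ι ι R} {i : ι} {v : ι → R}
    (hv : v ∈ Submodule.span R (A '' {i}ᶜ)) : A.detUpdateRow i v = 0 := by
  refine (Submodule.span_le (p := LinearMap.ker (A.detUpdateRow i)) |>.2 ?_) hv
  rintro _ ⟨r, hr, rfl⟩
  exact det_zero_of_row_eq hr (by simp [updateRow_ne hr])

theorem linearMap_det_updateRow_three_term {Z : Matrix ι ι R} {p t : ι} (hpt : p ≠ t)
    (φ : (ι → R) →ₗ[R] R) (hφ : ∀ r, r ≠ p → r ≠ t → φ (Z r) = 0) (y : ι → R) :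
    φ (Z p) * (Z.updateRow p y).det - φ y * Z.det + φ (Z t) * (Z.updateRow t y).det = 0 := by
  have hcramer := congrArg φ (det_smul_eq_sum_det_updateRow_smul Z y)
  rw [map_smul, map_sum, Fintype.sum_eq_add p t hpt] at hcramer
  · simp only [map_smul, smul_eq_mul] at hcramer
    linear_combination -hcramer
  · rintro r ⟨hrp, hrt⟩
    rw [map_smul, hφ r hrp hrt, smul_zero]

end Matrix

section DiscreteCalculus

variable {N : ℕ}

theorem shift_eq_add_Δ (j : Fin N) (f : (Fin N → ℤ) → ℝ) (n : Fin N → ℤ) :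
    f (n + Pi.single j 1) = f n + Δ j f n := by
  simp [Δ]

theorem Δ_comm (j k : Fin N) (f : (Fin N → ℤ) → ℝ) : Δ j (Δ k f) = Δ k (Δ j f) := by
  funext n
  simp only [Δ, add_right_comm n]
  ring

end DiscreteCalculus

section DiffRowSpan

variable {N : ℕ} {A : Type*} (ξ : A → Fin N → (Fin N → ℤ) → ℝ) (j k : Fin N)

def diffRowSpan (q : ℕ) (n : Fin N → ℤ) : Submodule ℝ (A → ℝ) :=
  Submodule.span ℝ (insert (fun a => ξ a k n) ((fun r a => (Δ j)^[r] (ξ a j) n) '' Set.Iio q))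

variable {ξ j k}

theorem diffRowSpan_mono {q q' : ℕ} (h : q ≤ q') (n : Fin N → ℤ) :
    diffRowSpan ξ j k q n ≤ diffRowSpan ξ j k q' n :=
  Submodule.span_mono (Set.insert_subset_insert (Set.image_mono (Set.Iio_subset_Iio h)))

theorem diffRowSpan_shift_le {Qkj : (Fin N → ℤ) → ℝ}
    (hkj : ∀ a, Δ j (ξ a k) = T j Qkj * ξ a j) (q : ℕ) (n : Fin N → ℤ) :
    diffRowSpan ξ j k q (n + Pi.single j 1) ≤ diffRowSpan ξ j k (q + 1) n := by
  refine Submodule.span_le.2 (Set.insert_subset_iff.2 ⟨?_, ?_⟩)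
  · have hrow : (fun a => ξ a k (n + Pi.single j 1))
        = (fun a => ξ a k n) + Qkj (n + Pi.single j 1) • fun a => ξ a j n := by
      funext a
      simp [shift_eq_add_Δ j (ξ a k), hkj, T, mul_comm]
    rw [SetLike.mem_coe, hrow]
    exact add_mem (Submodule.subset_span (Set.mem_insert _ _))
      (Submodule.smul_mem _ _ (Submodule.subset_span
        (Set.mem_insert_of_mem _ ⟨0, Nat.succ_pos q, rfl⟩)))
  · rintro _ ⟨r, hr, rfl⟩
    have hrow : (fun a => (Δ j)^[r] (ξ a j) (n + Pi.single j 1))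
        = (fun a => (Δ j)^[r] (ξ a j) n) + fun a => (Δ j)^[r + 1] (ξ a j) n := by
      funext a
      simp [shift_eq_add_Δ j, Function.iterate_succ_apply']
    dsimp only [SetLike.mem_coe]
    rw [hrow]
    refine add_mem (Submodule.subset_span (Set.mem_insert_of_mem _ ⟨r, ?_, rfl⟩))
      (Submodule.subset_span (Set.mem_insert_of_mem _ ⟨r + 1, ?_, rfl⟩))
    · exact Nat.lt_succ_of_lt hr
    · exact Nat.succ_lt_succ hr

theorem Δ_iterate_mem_diffRowSpan {Qjk Qkj : (Fin N → ℤ) → ℝ}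
    (hjk : ∀ a, Δ k (ξ a j) = T k Qjk * ξ a k) (hkj : ∀ a, Δ j (ξ a k) = T j Qkj * ξ a j)
    (q : ℕ) (n : Fin N → ℤ) :
    (fun a => Δ k ((Δ j)^[q] (ξ a j)) n) ∈ diffRowSpan ξ j k q n := by
  induction q generalizing n with
  | zero =>
    have hrow : (fun a => Δ k (ξ a j) n) = Qjk (n + Pi.single k 1) • fun a => ξ a k n := by
      funext a
      simp [hjk, T]
    simp only [Function.iterate_zero, id_eq]
    rw [hrow]
    exact Submodule.smul_mem _ _ (Submodule.subset_span (Set.mem_insert _ _))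
  | succ q ih =>
    have hrow : (fun a => Δ k ((Δ j)^[q + 1] (ξ a j)) n)
        = (fun a => Δ k ((Δ j)^[q] (ξ a j)) (n + Pi.single j 1))
          - fun a => Δ k ((Δ j)^[q] (ξ a j)) n := by
      funext a
      rw [Function.iterate_succ_apply', ← Δ_comm]
      rfl
    rw [hrow]
    exact sub_mem (diffRowSpan_shift_le hkj q n (ih _)) (diffRowSpan_mono q.le_succ n (ih n))

end DiffRowSpan

section Wronskian

variable {N : ℕ} {m : Fin N → ℕ} {ξ : (Σ j : Fin N, Fin (m j)) → Fin N → (Fin N → ℤ) → ℝ}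
  {Q : Fin N → Fin N → (Fin N → ℤ) → ℝ}

theorem Wmat_shift_block (k : Fin N) (q : Fin (m k)) (n : Fin N → ℤ) :
    Wmat m ξ (n + Pi.single k 1) ⟨k, q⟩
      = Wmat m ξ n ⟨k, q⟩ + fun a => (Δ k)^[q + 1] (ξ a k) n :=
  funext fun a => by simp [Wmat, shift_eq_add_Δ k, Function.iterate_succ_apply']

theorem Wmat_shift_lastRow (k : Fin N) (hk : 0 < m k) (n : Fin N → ℤ) :
    Wmat m ξ (n + Pi.single k 1) (lastRow m k hk)
      = Wmat m ξ n (lastRow m k hk) + fun a => (Δ k)^[m k] (ξ a k) n := by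
  rw [lastRow, Wmat_shift_block, Nat.sub_add_cancel hk]

theorem Wmat_shift_sub_mem_span
    (hξ : ∀ a, ∀ j k : Fin N, j ≠ k → Δ k (ξ a j) = T k (Q j k) * ξ a k)
    {i k : Fin N} (hik : i ≠ k) (hi : 0 < m i) (hk : 0 < m k)
    {s : Σ j : Fin N, Fin (m j)} (hsk : s.1 ≠ k) (n : Fin N → ℤ) :
    Wmat m ξ (n + Pi.single k 1) s - Wmat m ξ n s
      ∈ Submodule.span ℝ (Wmat m ξ n '' {lastRow m i hi}ᶜ) := by
  obtain ⟨j, q⟩ := s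
  have hle : diffRowSpan ξ j k q n ≤ Submodule.span ℝ (Wmat m ξ n '' {lastRow m i hi}ᶜ) := by
    refine Submodule.span_le.2 (Set.insert_subset_iff.2 ⟨?_, ?_⟩)
    · exact Submodule.subset_span
        ⟨⟨k, ⟨0, hk⟩⟩, fun h => hik (congrArg Sigma.fst h).symm, rfl⟩
    · rintro _ ⟨r, hr, rfl⟩
      refine Submodule.subset_span ⟨⟨j, ⟨r, hr.trans q.2⟩⟩, fun h => ?_, rfl⟩
      obtain ⟨rfl, hr'⟩ := Sigma.mk.inj_iff.1 h
      have := congrArg Fin.val (eq_of_heq hr')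
      simp only [Set.mem_Iio] at hr this
      omega
  exact hle (Δ_iterate_mem_diffRowSpan (hξ · j k hsk) (hξ · k j (Ne.symm hsk)) q n)

theorem Wmat_shift_mem_span
    (hξ : ∀ a, ∀ j k : Fin N, j ≠ k → Δ k (ξ a j) = T k (Q j k) * ξ a k)
    {i k : Fin N} (hik : i ≠ k) (hi : 0 < m i) (hk : 0 < m k)
    {r : Σ j : Fin N, Fin (m j)} (hri : r ≠ lastRow m i hi) (hrk : r ≠ lastRow m k hk)
    (n : Fin N → ℤ) :
    Wmat m ξ (n + Pi.single k 1) r ∈ Submodule.span ℝ (Wmat m ξ n '' {lastRow m i hi}ᶜ) := by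
  obtain ⟨j, q⟩ := r
  by_cases hjk : j = k
  · subst hjk
    have hq : (q : ℕ) + 1 < m j := by
      have : (q : ℕ) ≠ m j - 1 := fun h => hrk (Sigma.ext rfl (heq_of_eq (Fin.ext h)))
      omega
    rw [Wmat_shift_block]
    exact add_mem (Submodule.subset_span ⟨_, hri, rfl⟩)
      (Submodule.subset_span ⟨⟨j, ⟨q + 1, hq⟩⟩, fun h => hik (congrArg Sigma.fst h).symm, rfl⟩)
  · rw [← add_sub_cancel (Wmat m ξ n ⟨j, q⟩) (Wmat m ξ (n + Pi.single k 1) ⟨j, q⟩)]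
    exact add_mem (Submodule.subset_span ⟨_, hri, rfl⟩)
      (Wmat_shift_sub_mem_span hξ hik hi hk hjk n)

end Wronskian

theorem statement_18_general (N : ℕ)
    (Q : Fin N → Fin N → (Fin N → ℤ) → ℝ)
    (m : Fin N → ℕ) (hm : ∀ j, 0 < m j)
    (ξ : (Σ j : Fin N, Fin (m j)) → Fin N → (Fin N → ℤ) → ℝ)
    (hξ : ∀ a, ∀ j k : Fin N, j ≠ k → Δ k (ξ a j) = T k (Q j k) * ξ a k)
    (H : Fin N → (Fin N → ℤ) → ℝ)
    (Ω : (Σ j : Fin N, Fin (m j)) → (Fin N → ℤ) → ℝ)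
    (hΩ : ∀ a, ∀ l : Fin N, Δ l (Ω a) = ξ a l * T l (H l)) :
    ∀ i k : Fin N, i ≠ k → ∀ n : Fin N → ℤ,
      (Wmat m ξ n).det
          * (((Wmat m ξ (n + Pi.single k 1)).updateRow (lastRow m i (hm i))
                (fun a => Ω a (n + Pi.single k 1))).det
             - ((Wmat m ξ n).updateRow (lastRow m i (hm i)) (fun a => Ω a n)).det)
        - ((Wmat m ξ n).updateRow (lastRow m i (hm i)) (fun a => Ω a n)).det
          * ((Wmat m ξ (n + Pi.single k 1)).det - (Wmat m ξ n).det)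
        + ((Wmat m ξ n).updateRow (lastRow m i (hm i))
              (fun a => (Δ k)^[m k] (ξ a k) n)).det
          * ((Wmat m ξ (n + Pi.single k 1)).updateRow (lastRow m k (hm k))
              (fun a => Ω a (n + Pi.single k 1))).det
        = 0 := by
  intro i k hik n
  set ri := lastRow m i (hm i)
  set rk := lastRow m k (hm k)
  set φ := (Wmat m ξ n).detUpdateRow ri
  have hφ : ∀ v ∈ Submodule.span ℝ (Wmat m ξ n '' {ri}ᶜ), φ v = 0 :=
    fun _ hv => Matrix.detUpdateRow_eq_zero_of_mem_span hv
  have hrk : rk ≠ ri := fun h => hik (congrArg Sigma.fst h).symm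
  have hk0 : (⟨k, ⟨0, hm k⟩⟩ : Σ j : Fin N, Fin (m j)) ≠ ri :=
    fun h => hik (congrArg Sigma.fst h).symm
  have h_ri : φ (Wmat m ξ (n + Pi.single k 1) ri) = (Wmat m ξ n).det := by
    rw [← sub_add_cancel (Wmat m ξ (n + Pi.single k 1) ri) (Wmat m ξ n ri), map_add,
      hφ _ (Wmat_shift_sub_mem_span hξ hik (hm i) (hm k) hik n), zero_add]
    simp [φ]
  have h_rk : φ (Wmat m ξ (n + Pi.single k 1) rk) = φ (fun a => (Δ k)^[m k] (ξ a k) n) := by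
    rw [Wmat_shift_lastRow, map_add, hφ _ (Submodule.subset_span ⟨rk, hrk, rfl⟩), zero_add]
  have h_Ω : φ (fun a => Ω a (n + Pi.single k 1)) = φ (fun a => Ω a n) := by
    have hshift : (fun a => Ω a (n + Pi.single k 1))
        = (fun a => Ω a n) + H k (n + Pi.single k 1) • Wmat m ξ n ⟨k, ⟨0, hm k⟩⟩ := by
      funext a
      simp [shift_eq_add_Δ k (Ω a), hΩ, T, Wmat, mul_comm]
    rw [hshift, map_add, map_smul, hφ _ (Submodule.subset_span ⟨_, hk0, rfl⟩), smul_zero,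
      add_zero]
  have key := Matrix.linearMap_det_updateRow_three_term hrk.symm φ
    (fun _ hr₁ hr₂ => hφ _ (Wmat_shift_mem_span hξ hik (hm i) (hm k) hr₁ hr₂ n))
    (fun a => Ω a (n + Pi.single k 1))
  rw [h_ri, h_rk, h_Ω] at key
  simp only [φ, Matrix.detUpdateRow_apply] at key
  linear_combination key

/-- The bilinear identity
`det 𝒲 · Δ_k(det ℍ_i) − det ℍ_i · Δ_k(det 𝒲) + det 𝒲_{ki} · T_k(det ℍ_k) = 0`
for `i ≠ k`, where `ℍ_i` is `𝒲` with the last row of the `i`-th block replaced by the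
potentials `(Ω^1, …, Ω^M)` and `𝒲_{ki}` is `𝒲` with the last row of the `i`-th block
replaced by `Δ_k^{m_k} ξ_k`. -/
theorem statement_18 (N : ℕ) (hN : 2 ≤ N)
    (Q : Fin N → Fin N → (Fin N → ℤ) → ℝ)
    (m : Fin N → ℕ) (hm : ∀ j, 0 < m j)
    (ξ : (Σ j : Fin N, Fin (m j)) → Fin N → (Fin N → ℤ) → ℝ)
    (hξ : ∀ a, ∀ j k : Fin N, j ≠ k → Δ k (ξ a j) = T k (Q j k) * ξ a k)
    (H : Fin N → (Fin N → ℤ) → ℝ)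
    (hH : ∀ j k : Fin N, j ≠ k → Δ j (H k) = Q j k * T j (H j))
    (Ω : (Σ j : Fin N, Fin (m j)) → (Fin N → ℤ) → ℝ)
    (hΩ : ∀ a, ∀ l : Fin N, Δ l (Ω a) = ξ a l * T l (H l)) :
    ∀ i k : Fin N, i ≠ k → ∀ n : Fin N → ℤ,
      (Wmat m ξ n).det
          * (((Wmat m ξ (n + Pi.single k 1)).updateRow (lastRow m i (hm i))
                (fun a => Ω a (n + Pi.single k 1))).det
             - ((Wmat m ξ n).updateRow (lastRow m i (hm i)) (fun a => Ω a n)).det)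
        - ((Wmat m ξ n).updateRow (lastRow m i (hm i)) (fun a => Ω a n)).det
          * ((Wmat m ξ (n + Pi.single k 1)).det - (Wmat m ξ n).det)
        + ((Wmat m ξ n).updateRow (lastRow m i (hm i))
              (fun a => (Δ k)^[m k] (ξ a k) n)).det
          * ((Wmat m ξ (n + Pi.single k 1)).updateRow (lastRow m k (hm k))
              (fun a => Ω a (n + Pi.single k 1))).det
        = 0 :=
  statement_18_general N Q m hm ξ hξ H Ω hΩ
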